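/- Let G be a C4-free simple graph and v a vertex of G. Then every edge f \in D_v(2) belongs to Sect_e(2) for at most two edges e \in D_v(0); that is, the number of edges e incident to v with dist_G(e, f) = 1 is at most two. -/

import Mathlib

/-
Both endpoints `x, y` of an edge of `D_v(2)` are at distance at least two from `v`, so an edge
`vu` at distance one from `xy` must have `u` adjacent to `x` or to `y`: `u` is a common neighbour
of `v` and `x` or of `v` and `y`. In a `C₄`-free graph two distinct vertices have at most one
common neighbour, so at most two such `u` exist.
-/

open SimpleGraph

/-- A graph is `C₄`-free if it contains no cycle of length four as a subgraph,
i.e. there are no four distinct vertices `a, b, c, d` with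
`a ~ b`, `b ~ c`, `c ~ d` and `d ~ a`. -/
def C4Free {V : Type*} (G : SimpleGraph V) : Prop :=
  ¬ ∃ a b c d : V, a ≠ b ∧ a ≠ c ∧ a ≠ d ∧ b ≠ c ∧ b ≠ d ∧ c ≠ d ∧
      G.Adj a b ∧ G.Adj b c ∧ G.Adj c d ∧ G.Adj d a

/-- The distance between two edges (or generally two pairs of vertices):
the minimum over endpoints `x ∈ e`, `y ∈ f` of the graph distance. -/
noncomputable def edgeDist {V : Type*} (G : SimpleGraph V) (e f : Sym2 V) : ℕ∞ :=
  ⨅ x ∈ e, ⨅ y ∈ f, G.edist x y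

/-- `Dkl G v k l` is the set of edges `{x, y}` of `G` with
`dist(x, v) = k` and `dist(y, v) = l`. -/
def Dkl {V : Type*} (G : SimpleGraph V) (v : V) (k l : ℕ) : Set (Sym2 V) :=
  {e | e ∈ G.edgeSet ∧ ∃ x y : V, e = s(x, y) ∧
    G.edist x v = (k : ℕ∞) ∧ G.edist y v = (l : ℕ∞)}

/-- `D G v k = D_v(k) = D_v(k, k) ∪ D_v(k, k+1)`. -/
def D {V : Type*} (G : SimpleGraph V) (v : V) (k : ℕ) : Set (Sym2 V) :=
  Dkl G v k k ∪ Dkl G v k (k + 1)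

/-- `Sect G v e = Sect_e(2)`: the edges of `D_v(2)` at distance exactly one
from the edge `e`. -/
noncomputable def Sect {V : Type*} (G : SimpleGraph V) (v : V) (e : Sym2 V) : Set (Sym2 V) :=
  {f | f ∈ D G v 2 ∧ edgeDist G e f = 1}

/-- An induced matching: a set `M` of edges of `G` such that the subgraph of `G`
induced by the set of all endpoints of edges in `M` has edge set exactly `M`. -/
def IsInducedMatching {V : Type*} (G : SimpleGraph V) (M : Set (Sym2 V)) : Prop :=
  M ⊆ G.edgeSet ∧ {e ∈ G.edgeSet | ∀ x ∈ e, ∃ f ∈ M, x ∈ f} = M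

section

variable {V : Type*} {G : SimpleGraph V}

lemma edgeDist_mk_mk (a b c d : V) :
    edgeDist G s(a, b) s(c, d) =
      G.edist a c ⊓ G.edist b c ⊓ (G.edist a d ⊓ G.edist b d) := by
  simp [edgeDist, Sym2.mem_iff, iInf_or, iInf_inf_eq]

lemma exists_adj_of_edgeDist_eq_one {e f : Sym2 V} (h : edgeDist G e f = 1) :
    ∃ a ∈ e, ∃ b ∈ f, G.Adj a b := by
  induction e using Sym2.ind with | _ a b => ?_
  induction f using Sym2.ind with | _ c d => ?_
  rw [edgeDist_mk_mk] at h
  simp only [Sym2.mem_iff, exists_eq_or_imp, exists_eq_left, ← edist_eq_one_iff_adj]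
  rcases min_eq_iff.mp h with ⟨h, -⟩ | ⟨h, -⟩ <;>
    rcases min_eq_iff.mp h with ⟨h, -⟩ | ⟨h, -⟩ <;> tauto

lemma exists_adj_of_mem_D_zero {v : V} {e : Sym2 V} (he : e ∈ D G v 0) :
    ∃ u, G.Adj v u ∧ e = s(v, u) := by
  rcases he with ⟨hes, x, y, rfl, hx, hy⟩ | ⟨-, x, y, rfl, hx, hy⟩
  · simp only [Nat.cast_zero, edist_eq_zero_iff] at hx hy
    subst hx hy
    exact absurd hes (by simp)
  · simp only [Nat.cast_zero, zero_add, Nat.cast_one, edist_eq_zero_iff,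
      edist_eq_one_iff_adj] at hx hy
    exact ⟨y, hx ▸ hy.symm, by rw [hx]⟩

lemma le_edist_of_mem_D {v w : V} {k : ℕ} {f : Sym2 V} (hf : f ∈ D G v k) (hw : w ∈ f) :
    (k : ℕ∞) ≤ G.edist w v := by
  rcases hf with ⟨-, x, y, rfl, hx, hy⟩ | ⟨-, x, y, rfl, hx, hy⟩ <;>
    rcases Sym2.mem_iff.mp hw with rfl | rfl <;> simp [hx, hy]

lemma ne_of_two_le_edist {v w : V} (h : 2 ≤ G.edist w v) : v ≠ w := by
  rintro rfl
  simp at h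

lemma not_adj_of_two_le_edist {v w : V} (h : 2 ≤ G.edist w v) : ¬ G.Adj v w := by
  intro hvw
  rw [edist_eq_one_iff_adj.mpr hvw.symm] at h
  exact absurd h (by decide)

lemma mem_commonNeighbors_of_edgeDist_eq_one {v u x y : V} (hu : G.Adj v u)
    (hx : 2 ≤ G.edist x v) (hy : 2 ≤ G.edist y v) (h : edgeDist G s(v, u) s(x, y) = 1) :
    u ∈ G.commonNeighbors v x ∪ G.commonNeighbors v y := by
  obtain ⟨a, ha, b, hb, hab⟩ := exists_adj_of_edgeDist_eq_one h
  rcases Sym2.mem_iff.mp ha with rfl | rfl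
  · rcases Sym2.mem_iff.mp hb with rfl | rfl
    exacts [absurd hab (not_adj_of_two_le_edist hx), absurd hab (not_adj_of_two_le_edist hy)]
  · rcases Sym2.mem_iff.mp hb with rfl | rfl
    exacts [.inl ⟨hu, hab.symm⟩, .inr ⟨hu, hab.symm⟩]

lemma C4Free.subsingleton_commonNeighbors (hG : C4Free G) {v w : V} (hvw : v ≠ w) :
    (G.commonNeighbors v w).Subsingleton := by
  rintro u₁ ⟨hv₁, hw₁⟩ u₂ ⟨hv₂, hw₂⟩
  by_contra hu
  exact hG ⟨v, u₁, w, u₂, hv₁.ne, hvw, hv₂.ne, hw₁.ne.symm, hu, hw₂.ne,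
    hv₁, hw₁.symm, hw₂, hv₂.symm⟩

end

lemma Set.Subsingleton.eq_or_eq_or_eq_of_union {α : Type*} {s t : Set α}
    (hs : s.Subsingleton) (ht : t.Subsingleton) {a b c : α}
    (ha : a ∈ s ∪ t) (hb : b ∈ s ∪ t) (hc : c ∈ s ∪ t) :
    a = b ∨ a = c ∨ b = c := by
  rcases ha with ha | ha <;> rcases hb with hb | hb <;> rcases hc with hc | hc <;>
    first
    | exact Or.inl (hs ha hb) | exact Or.inl (ht ha hb)
    | exact Or.inr (Or.inl (hs ha hc)) | exact Or.inr (Or.inl (ht ha hc))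
    | exact Or.inr (Or.inr (hs hb hc)) | exact Or.inr (Or.inr (ht hb hc))

/-- In a C4-free graph, every edge `f` in `D_v(2)` belongs to `Sect_e(2)` for
at most two edges `e` in `D_v(0)`. -/
theorem stmt_4 {V : Type*} (G : SimpleGraph V) (hG : C4Free G) (v : V)
    (f : Sym2 V) (hf : f ∈ D G v 2) :
    ∀ e₁ e₂ e₃ : Sym2 V,
      e₁ ∈ D G v 0 → edgeDist G e₁ f = 1 →
      e₂ ∈ D G v 0 → edgeDist G e₂ f = 1 →
      e₃ ∈ D G v 0 → edgeDist G e₃ f = 1 →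
      e₁ = e₂ ∨ e₁ = e₃ ∨ e₂ = e₃ := by
  intro e₁ e₂ e₃ h₁ hd₁ h₂ hd₂ h₃ hd₃
  induction f using Sym2.ind with | _ x y => ?_
  have hx : 2 ≤ G.edist x v := le_edist_of_mem_D hf (Sym2.mem_mk_left x y)
  have hy : 2 ≤ G.edist y v := le_edist_of_mem_D hf (Sym2.mem_mk_right x y)
  obtain ⟨u₁, hu₁, rfl⟩ := exists_adj_of_mem_D_zero h₁
  obtain ⟨u₂, hu₂, rfl⟩ := exists_adj_of_mem_D_zero h₂
  obtain ⟨u₃, hu₃, rfl⟩ := exists_adj_of_mem_D_zero h₃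
  have hu := (hG.subsingleton_commonNeighbors (ne_of_two_le_edist hx)).eq_or_eq_or_eq_of_union
    (hG.subsingleton_commonNeighbors (ne_of_two_le_edist hy))
    (mem_commonNeighbors_of_edgeDist_eq_one hu₁ hx hy hd₁)
    (mem_commonNeighbors_of_edgeDist_eq_one hu₂ hx hy hd₂)
    (mem_commonNeighbors_of_edgeDist_eq_one hu₃ hx hy hd₃)
  rcases hu with rfl | rfl | rfl <;> simp
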